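/- For the metric diag(1,…,1,−1/G(q)) with G positive and C², the scalar curvature R = g^{JK} R_{JK} equals Σ_j [ −(3/(2G²)) (∂G/∂q^j)² + (1/G) ∂²G/∂(q^j)² ], equivalently Σ_j [ −6 H_j²/G² + (2/G) ∂H_j/∂q^j ] with H_j = (1/2)∂G/∂q^j. -/

import Mathlib

open scoped BigOperators

/-- Partial derivative of `f : ℝ^N → ℝ` in direction `i`. -/
noncomputable def pd {N : ℕ} (f : (Fin N → ℝ) → ℝ) (i : Fin N) (q : Fin N → ℝ) : ℝ :=
  fderiv ℝ f q (Pi.single i 1)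

/-- Second partial derivative `∂²f/∂q^i∂q^j`. -/
noncomputable def pd2 {N : ℕ} (f : (Fin N → ℝ) → ℝ) (i j : Fin N) (q : Fin N → ℝ) : ℝ :=
  pd (fun x => pd f j x) i q

/-- Partial derivative on `ℝ^{N+1}`. -/
noncomputable def pdx {N : ℕ} (f : (Fin (N + 1) → ℝ) → ℝ) (I : Fin (N + 1))
    (x : Fin (N + 1) → ℝ) : ℝ :=
  fderiv ℝ f x (Pi.single I 1)

/-- Covariant metric `diag(1,…,1,−1/G(q))` on `ℝ^{N+1}`. -/
noncomputable def gcov {N : ℕ} (G : (Fin N → ℝ) → ℝ) (x : Fin (N + 1) → ℝ) :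
    Matrix (Fin (N + 1)) (Fin (N + 1)) ℝ :=
  Matrix.diagonal (fun I => if I = Fin.last N then -1 / G (x ∘ Fin.castSucc) else 1)

/-- Contravariant metric `diag(1,…,1,−G(q))` on `ℝ^{N+1}`. -/
noncomputable def gcon {N : ℕ} (G : (Fin N → ℝ) → ℝ) (x : Fin (N + 1) → ℝ) :
    Matrix (Fin (N + 1)) (Fin (N + 1)) ℝ :=
  Matrix.diagonal (fun I => if I = Fin.last N then -G (x ∘ Fin.castSucc) else 1)

/-- Christoffel symbols of the second kind,
`Γ^I_{JK} = ½ g^{IL}(∂_K g_{LJ} + ∂_J g_{KL} − ∂_L g_{JK})`. -/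
noncomputable def Gamma {N : ℕ} (G : (Fin N → ℝ) → ℝ) (I J K : Fin (N + 1))
    (x : Fin (N + 1) → ℝ) : ℝ :=
  (1 / 2) * ∑ L, gcon G x I L *
    (pdx (fun y => gcov G y L J) K x + pdx (fun y => gcov G y K L) J x
      - pdx (fun y => gcov G y J K) L x)

/-- `H_k = ½ ∂G/∂q^k`. -/
noncomputable def Hh {N : ℕ} (G : (Fin N → ℝ) → ℝ) (k : Fin N) (q : Fin N → ℝ) : ℝ :=
  (1 / 2) * pd G k q

/-- Curvature tensor
`R^L_{IJK} = ∂_I Γ^L_{JK} − ∂_J Γ^L_{IK} − Σ_M (Γ^M_{IK} Γ^L_{JM} − Γ^M_{JK} Γ^L_{IM})`. -/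
noncomputable def Riem {N : ℕ} (G : (Fin N → ℝ) → ℝ) (L I J K : Fin (N + 1))
    (x : Fin (N + 1) → ℝ) : ℝ :=
  pdx (fun y => Gamma G L J K y) I x - pdx (fun y => Gamma G L I K y) J x
    - ∑ M, (Gamma G M I K x * Gamma G L J M x - Gamma G M J K x * Gamma G L I M x)

/-- Ricci tensor `R_{JK} = Σ_M R^M_{MJK}`. -/
noncomputable def Ric {N : ℕ} (G : (Fin N → ℝ) → ℝ) (J K : Fin (N + 1))
    (x : Fin (N + 1) → ℝ) : ℝ :=
  ∑ M, Riem G M M J K x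

/-!
Write `x = (q, t)` with `t = x (Fin.last N)`. The only non-constant entry of the metric is
`g_tt = -1/G(q)`, and it does not depend on `t`, so the only non-zero Christoffel symbols are
`Γ^t_{tk} = Γ^t_{kt} = -∂_k G/(2G)` and `Γ^k_{tt} = -∂_k G/(2G²)`. Consequently the Ricci tensor
has `R_{jj} = ∂²_j G/(2G) - 3(∂_j G)²/(4G²)` and `R_{tt} = Σ_j (3(∂_j G)²/(4G³) - ∂²_j G/(2G²))`,
and contracting with `diag(1, …, 1, -G)` doubles the diagonal terms `R_{jj}`.
-/

open Fin

section PartialDerivative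

variable {N : ℕ} {f g : (Fin N → ℝ) → ℝ} {i : Fin N} {q : Fin N → ℝ}

@[simp]
lemma pd_const (c : ℝ) : pd (fun _ => c) i q = 0 := by
  simp [pd]

lemma pd_neg : pd (fun x => -f x) i q = -pd f i q := by
  simp [pd]

lemma pd_const_mul (c : ℝ) (hf : DifferentiableAt ℝ f q) :
    pd (fun x => c * f x) i q = c * pd f i q := by
  simp [pd, fderiv_const_mul hf]

lemma pd_pow (n : ℕ) (hf : DifferentiableAt ℝ f q) :
    pd (fun x => f x ^ n) i q = n * f q ^ (n - 1) * pd f i q := by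
  simp [pd, fderiv_fun_pow n hf]

lemma pd_inv (hf : DifferentiableAt ℝ f q) (hf0 : f q ≠ 0) :
    pd (fun x => (f x)⁻¹) i q = -pd f i q / f q ^ 2 := by
  rw [pd, fderiv_fun_comp q (differentiableAt_inv hf0) hf, fderiv_inv]
  simp only [ContinuousLinearMap.comp_apply, ContinuousLinearMap.toSpanSingleton_apply,
    smul_eq_mul, mul_neg, pd]
  ring

lemma pd_mul (hf : DifferentiableAt ℝ f q) (hg : DifferentiableAt ℝ g q) :
    pd (fun x => f x * g x) i q = pd f i q * g q + f q * pd g i q := by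
  simp only [pd, fderiv_fun_mul hf hg, add_apply, smul_apply,
    smul_eq_mul]
  ring

lemma pd_div (hf : DifferentiableAt ℝ f q) (hg : DifferentiableAt ℝ g q) (hg0 : g q ≠ 0) :
    pd (fun x => f x / g x) i q = (pd f i q * g q - f q * pd g i q) / g q ^ 2 := by
  simp only [div_eq_mul_inv]
  rw [pd_mul (g := fun x => (g x)⁻¹) hf (hg.inv hg0), pd_inv hg hg0]
  field_simp
  ring

lemma differentiable_pd (hf : ContDiff ℝ 2 f) (i : Fin N) : Differentiable ℝ (pd f i) :=
  ((hf.fderiv_right (by norm_num)).clm_apply contDiff_const).differentiable one_ne_zero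

end PartialDerivative

section LastCoordinate

variable {N : ℕ} {f : (Fin N → ℝ) → ℝ} {x : Fin (N + 1) → ℝ}

lemma pdx_comp_castSucc (hf : DifferentiableAt ℝ f (x ∘ castSucc)) (I : Fin (N + 1)) :
    pdx (fun y => f (y ∘ castSucc)) I x
      = fderiv ℝ f (x ∘ castSucc) ((Pi.single I 1 : Fin (N + 1) → ℝ) ∘ castSucc) :=
  let restrict : (Fin (N + 1) → ℝ) →L[ℝ] (Fin N → ℝ) :=
    ContinuousLinearMap.pi fun i => ContinuousLinearMap.proj i.castSucc
  congrArg (· (Pi.single I 1)) (hf.hasFDerivAt.comp x restrict.hasFDerivAt).fderiv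

lemma pdx_comp_castSucc_last (hf : DifferentiableAt ℝ f (x ∘ castSucc)) :
    pdx (fun y => f (y ∘ castSucc)) (last N) x = 0 := by
  have : (Pi.single (last N) 1 : Fin (N + 1) → ℝ) ∘ castSucc = 0 := by
    funext i
    simp [castSucc_ne_last]
  rw [pdx_comp_castSucc hf, this, map_zero]

lemma pdx_comp_castSucc_castSucc (hf : DifferentiableAt ℝ f (x ∘ castSucc)) (i : Fin N) :
    pdx (fun y => f (y ∘ castSucc)) i.castSucc x = pd f i (x ∘ castSucc) := by
  have : (Pi.single i.castSucc 1 : Fin (N + 1) → ℝ) ∘ castSucc = Pi.single i 1 := by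
    funext j
    simp [Pi.single_apply, castSucc_inj]
  rw [pdx_comp_castSucc hf, this, pd]

@[simp]
lemma pdx_const (c : ℝ) (I : Fin (N + 1)) : pdx (fun _ => c) I x = 0 := by
  simp [pdx]

end LastCoordinate

section Christoffel

variable {N : ℕ} {G : (Fin N → ℝ) → ℝ} {x : Fin (N + 1) → ℝ}

lemma pdx_gcov (A B C : Fin (N + 1)) :
    pdx (fun y => gcov G y A B) C x
      = if A = last N ∧ B = last N then pdx (fun y => -1 / G (y ∘ castSucc)) C x else 0 := by
  split_ifs with h
  · obtain ⟨rfl, rfl⟩ := h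
    simp [gcov]
  · have : (fun y => gcov G y A B) = fun _ => if A = B then 1 else 0 := by
      funext y
      by_cases hAB : A = B
      · subst hAB
        simp_all [gcov]
      · simp [gcov, hAB]
    simp [this]

lemma Gamma_eq (I J K : Fin (N + 1)) :
    Gamma G I J K x = (1 / 2) * gcon G x I I *
      ((if I = last N ∧ J = last N then pdx (fun y => -1 / G (y ∘ castSucc)) K x else 0)
        + (if K = last N ∧ I = last N then pdx (fun y => -1 / G (y ∘ castSucc)) J x else 0)
        - (if J = last N ∧ K = last N then pdx (fun y => -1 / G (y ∘ castSucc)) I x else 0)) := by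
  rw [Gamma, Finset.sum_eq_single I]
  · simp only [pdx_gcov, mul_assoc]
  · intro L _ hL
    simp [gcon, Ne.symm hL]
  · simp

lemma pdx_neg_one_div_comp_castSucc (hG : DifferentiableAt ℝ G (x ∘ castSucc))
    (hG0 : G (x ∘ castSucc) ≠ 0) (i : Fin N) :
    pdx (fun y => -1 / G (y ∘ castSucc)) i.castSucc x
      = pd G i (x ∘ castSucc) / G (x ∘ castSucc) ^ 2 := by
  rw [pdx_comp_castSucc_castSucc (f := fun q => -1 / G q) (by fun_prop (disch := assumption)),
    pd_div (differentiableAt_const _) hG hG0]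
  simp

@[simp]
lemma Gamma_castSucc_castSucc_left (i j : Fin N) (K : Fin (N + 1)) :
    Gamma G i.castSucc j.castSucc K x = 0 := by
  simp [Gamma_eq, castSucc_ne_last]

@[simp]
lemma Gamma_castSucc_castSucc_right (i k : Fin N) (J : Fin (N + 1)) :
    Gamma G i.castSucc J k.castSucc x = 0 := by
  simp [Gamma_eq, castSucc_ne_last]

@[simp]
lemma Gamma_last_castSucc_castSucc (j k : Fin N) :
    Gamma G (last N) j.castSucc k.castSucc x = 0 := by
  simp [Gamma_eq, castSucc_ne_last]

lemma Gamma_last_last_castSucc (hG : DifferentiableAt ℝ G (x ∘ castSucc))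
    (hG0 : G (x ∘ castSucc) ≠ 0) (k : Fin N) :
    Gamma G (last N) (last N) k.castSucc x = -pd G k (x ∘ castSucc) / (2 * G (x ∘ castSucc)) := by
  simp only [Gamma_eq, one_div, gcon, Matrix.diagonal_apply_eq, ↓reduceIte, mul_neg, and_self,
    pdx_neg_one_div_comp_castSucc hG hG0, castSucc_ne_last, and_true, add_zero, and_false, sub_zero,
    neg_mul]
  field_simp

lemma Gamma_last_castSucc_last (hG : DifferentiableAt ℝ G (x ∘ castSucc))
    (hG0 : G (x ∘ castSucc) ≠ 0) (j : Fin N) :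
    Gamma G (last N) j.castSucc (last N) x = -pd G j (x ∘ castSucc) / (2 * G (x ∘ castSucc)) := by
  simp only [Gamma_eq, one_div, gcon, Matrix.diagonal_apply_eq, ↓reduceIte, mul_neg,
    castSucc_ne_last, and_false, and_self, pdx_neg_one_div_comp_castSucc hG hG0, zero_add, and_true,
    sub_zero, neg_mul]
  field_simp

lemma Gamma_castSucc_last_last (hG : DifferentiableAt ℝ G (x ∘ castSucc))
    (hG0 : G (x ∘ castSucc) ≠ 0) (i : Fin N) :
    Gamma G i.castSucc (last N) (last N) x
      = -pd G i (x ∘ castSucc) / (2 * G (x ∘ castSucc) ^ 2) := by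
  simp only [Gamma_eq, one_div, gcon, Matrix.diagonal_apply_eq, castSucc_ne_last, ↓reduceIte,
    mul_one, and_true, and_false, add_zero, and_self, pdx_neg_one_div_comp_castSucc hG hG0, zero_sub,
    mul_neg]
  field_simp

end Christoffel

section Curvature

variable {N : ℕ} {G : (Fin N → ℝ) → ℝ} {x : Fin (N + 1) → ℝ}

lemma pdx_Gamma_last_last_castSucc (hG : ContDiff ℝ 2 G) (hG0 : ∀ q, G q ≠ 0) (i k : Fin N) :
    pdx (fun y => Gamma G (last N) (last N) k.castSucc y) i.castSucc x
      = -pd2 G i k (x ∘ castSucc) / (2 * G (x ∘ castSucc))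
        + pd G k (x ∘ castSucc) * pd G i (x ∘ castSucc) / (2 * G (x ∘ castSucc) ^ 2) := by
  have hGd : Differentiable ℝ G := hG.differentiable (by norm_num)
  have hpd := differentiable_pd hG k
  have hΓ : (fun y => Gamma G (last N) (last N) k.castSucc y)
      = fun y => (fun q => -pd G k q / (2 * G q)) (y ∘ castSucc) :=
    funext fun y => Gamma_last_last_castSucc (hGd _) (hG0 _) k
  have hG0x := hG0 (x ∘ castSucc)
  have h2G : 2 * G (x ∘ castSucc) ≠ 0 := by positivity
  rw [hΓ, pdx_comp_castSucc_castSucc (f := fun q => -pd G k q / (2 * G q))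
      (by fun_prop (disch := simp [hG0])),
    pd_div (f := fun q => -pd G k q) (g := fun q => 2 * G q) (hpd _).neg
      ((hGd _).const_mul 2) h2G, pd_neg, pd_const_mul 2 (hGd _), pd2]
  field_simp
  ring

lemma pdx_Gamma_castSucc_last_last (hG : ContDiff ℝ 2 G) (hG0 : ∀ q, G q ≠ 0) (i k : Fin N) :
    pdx (fun y => Gamma G k.castSucc (last N) (last N) y) i.castSucc x
      = -pd2 G i k (x ∘ castSucc) / (2 * G (x ∘ castSucc) ^ 2)
        + pd G k (x ∘ castSucc) * pd G i (x ∘ castSucc) / G (x ∘ castSucc) ^ 3 := by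
  have hGd : Differentiable ℝ G := hG.differentiable (by norm_num)
  have hpd := differentiable_pd hG k
  have hΓ : (fun y => Gamma G k.castSucc (last N) (last N) y)
      = fun y => (fun q => -pd G k q / (2 * G q ^ 2)) (y ∘ castSucc) :=
    funext fun y => Gamma_castSucc_last_last (hGd _) (hG0 _) k
  have hG0x := hG0 (x ∘ castSucc)
  have h2G : 2 * G (x ∘ castSucc) ^ 2 ≠ 0 := by positivity
  rw [hΓ, pdx_comp_castSucc_castSucc (f := fun q => -pd G k q / (2 * G q ^ 2))
      (by fun_prop (disch := simp [hG0])),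
    pd_div (f := fun q => -pd G k q) (g := fun q => 2 * G q ^ 2) (hpd _).neg
      (((hGd _).pow 2).const_mul 2) h2G, pd_neg,
    pd_const_mul (f := fun q => G q ^ 2) 2 ((hGd _).pow 2), pd_pow 2 (hGd _), pd2]
  field_simp
  ring

@[simp]
lemma Riem_self (L I K : Fin (N + 1)) : Riem G L I I K x = 0 := by
  simp [Riem]

lemma Ric_castSucc_castSucc (hG : ContDiff ℝ 2 G) (hG0 : ∀ q, G q ≠ 0) (j : Fin N) :
    Ric G j.castSucc j.castSucc x
      = pd2 G j j (x ∘ castSucc) / (2 * G (x ∘ castSucc))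
        - 3 * pd G j (x ∘ castSucc) ^ 2 / (4 * G (x ∘ castSucc) ^ 2) := by
  have hGd : DifferentiableAt ℝ G (x ∘ castSucc) := hG.differentiable (by norm_num) _
  simp only [Ric, Riem, Finset.sum_sub_distrib, sum_univ_castSucc, Gamma_castSucc_castSucc_right,
    zero_mul, Finset.sum_const_zero, zero_add, Gamma_last_castSucc_castSucc, add_zero, sub_zero,
    pdx_const, pdx_Gamma_last_last_castSucc hG hG0, zero_sub, neg_add_rev,
    Gamma_castSucc_castSucc_left, mul_zero, Gamma_last_last_castSucc hGd (hG0 _),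
    Gamma_last_castSucc_last hGd (hG0 _)]
  field_simp
  ring

lemma Ric_last_last (hG : ContDiff ℝ 2 G) (hG0 : ∀ q, G q ≠ 0) :
    Ric G (last N) (last N) x
      = ∑ j : Fin N, (-pd2 G j j (x ∘ castSucc) / (2 * G (x ∘ castSucc) ^ 2)
        + 3 * pd G j (x ∘ castSucc) ^ 2 / (4 * G (x ∘ castSucc) ^ 3)) := by
  have hGd : DifferentiableAt ℝ G (x ∘ castSucc) := hG.differentiable (by norm_num) _
  rw [Ric, Fin.sum_univ_castSucc, Riem_self, add_zero]
  refine Finset.sum_congr rfl fun j _ => ?_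
  simp only [Riem, pdx_Gamma_castSucc_last_last hG hG0, Gamma_castSucc_castSucc_left, pdx_const,
    sub_zero, mul_zero, sum_univ_castSucc, Gamma_castSucc_castSucc_right, Finset.sum_const_zero,
    Gamma_last_castSucc_last hGd (hG0 _), Gamma_castSucc_last_last hGd (hG0 _), zero_add]
  field_simp
  ring

end Curvature

lemma sum_gcon_mul {N : ℕ} (G : (Fin N → ℝ) → ℝ) (x : Fin (N + 1) → ℝ)
    (R : Fin (N + 1) → Fin (N + 1) → ℝ) :
    ∑ J, ∑ K, gcon G x J K * R J K
      = ∑ j : Fin N, R j.castSucc j.castSucc - G (x ∘ castSucc) * R (last N) (last N) := by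
  simp only [gcon, Matrix.diagonal_apply, ite_mul, neg_mul, one_mul, zero_mul, Finset.sum_ite_eq,
    Finset.mem_univ, ↓reduceIte, sum_univ_castSucc, castSucc_ne_last]
  ring

lemma pd_Hh {N : ℕ} {G : (Fin N → ℝ) → ℝ} (hG : ContDiff ℝ 2 G) (i j : Fin N)
    (q : Fin N → ℝ) : pd (fun y => Hh G j y) i q = (1 / 2) * pd2 G i j q :=
  pd_const_mul (1 / 2) (differentiable_pd hG j q)

/-- The scalar curvature `R = g^{JK} R_{JK}` of the metric `diag(1,…,1,−1/G)` equals
`Σ_j [ −3/(2G²) (∂_j G)² + (1/G) ∂²_j G ]`, equivalently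
`Σ_j [ −6 H_j²/G² + (2/G) ∂_j H_j ]` with `H_j = ½ ∂_j G`. -/
theorem scalar_curvature_of_levelset_metric {N : ℕ} (G : (Fin N → ℝ) → ℝ)
    (hG : ContDiff ℝ 2 G) (hpos : ∀ q, 0 < G q) :
    ∀ x : Fin (N + 1) → ℝ,
      (∑ J, ∑ K, gcon G x J K * Ric G J K x)
          = ∑ j : Fin N,
              (-(3 / (2 * (G (x ∘ Fin.castSucc)) ^ 2)) * (pd G j (x ∘ Fin.castSucc)) ^ 2
                + (1 / G (x ∘ Fin.castSucc)) * pd2 G j j (x ∘ Fin.castSucc)) ∧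
      (∑ J, ∑ K, gcon G x J K * Ric G J K x)
          = ∑ j : Fin N,
              (-6 * (Hh G j (x ∘ Fin.castSucc)) ^ 2 / (G (x ∘ Fin.castSucc)) ^ 2
                + (2 / G (x ∘ Fin.castSucc)) * pd (fun y => Hh G j y) j (x ∘ Fin.castSucc)) := by
  intro x
  have hG0 : ∀ q, G q ≠ 0 := fun q => (hpos q).ne'
  have hG0x := hG0 (x ∘ castSucc)
  have hscalar : ∑ J, ∑ K, gcon G x J K * Ric G J K x
      = ∑ j : Fin N,
          (-(3 / (2 * (G (x ∘ castSucc)) ^ 2)) * (pd G j (x ∘ castSucc)) ^ 2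
            + (1 / G (x ∘ castSucc)) * pd2 G j j (x ∘ castSucc)) := by
    rw [sum_gcon_mul, Ric_last_last hG hG0, Finset.mul_sum, ← Finset.sum_sub_distrib]
    refine Finset.sum_congr rfl fun j _ => ?_
    rw [Ric_castSucc_castSucc hG hG0]
    field_simp
    ring
  refine ⟨hscalar, hscalar.trans (Finset.sum_congr rfl fun j _ => ?_)⟩
  rw [pd_Hh hG, Hh]
  field_simp
  ring
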